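/- arXiv:1209.3841 — 2 statements merged into one kernel-verified Lean document; each statement's English description precedes it below -/
import Mathlib

section
/- There exists a constant C > 0 such that for all z ∈ C^2 and all nonzero ξ_1, ξ_2 ∈ R^2, |Π(ξ_1) Π(-ξ_2) z| ≤ C |z| ∠(ξ_1, ξ_2), where ∠(ξ_1,ξ_2) ∈ [0,π] denotes the angle between ξ_1 and ξ_2 and Π(ξ) := (1/2)(I + (ξ_j α^j)/|ξ|). -/
/-!
Identify `ξ / |ξ|` with a unit complex number `u`; then `Π(ξ) = ½ [[1, ū], [u, 1]]`, and since
`|u₁| = 1` every entry of `Π(ξ₁) Π(-ξ₂)` has modulus `|u₁ - u₂| / 4`. So the Frobenius norm, which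
dominates the operator norm, is at most `|u₁ - u₂| / 2`, and the chord `|u₁ - u₂|` is at most the
arc `∠(ξ₁, ξ₂)`.
-/

open Matrix

noncomputable def sigma1 : Matrix (Fin 2) (Fin 2) ℂ := !![0, 1; 1, 0]
noncomputable def sigma2 : Matrix (Fin 2) (Fin 2) ℂ := !![0, -Complex.I; Complex.I, 0]

noncomputable def PiMat (ξ : EuclideanSpace ℝ (Fin 2)) : Matrix (Fin 2) (Fin 2) ℂ :=
  (1 / 2 : ℂ) • ((1 : Matrix (Fin 2) (Fin 2) ℂ) +
    ((‖ξ‖ : ℂ))⁻¹ • (((ξ 0 : ℝ) : ℂ) • sigma1 + ((ξ 1 : ℝ) : ℂ) • sigma2))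

open Complex ComplexConjugate InnerProductGeometry

noncomputable def unitComplex (ξ : EuclideanSpace ℝ (Fin 2)) : ℂ :=
  orthonormalBasisOneI.repr.symm (‖ξ‖⁻¹ • ξ)

theorem norm_unitComplex {ξ : EuclideanSpace ℝ (Fin 2)} (hξ : ξ ≠ 0) : ‖unitComplex ξ‖ = 1 := by
  rw [unitComplex, LinearIsometryEquiv.norm_map, norm_smul, norm_inv, norm_norm,
    inv_mul_cancel₀ (norm_ne_zero_iff.mpr hξ)]

theorem unitComplex_neg (ξ : EuclideanSpace ℝ (Fin 2)) : unitComplex (-ξ) = -unitComplex ξ := by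
  rw [unitComplex, unitComplex, norm_neg, smul_neg, map_neg]

theorem norm_unitComplex_sub_le_angle {ξ₁ ξ₂ : EuclideanSpace ℝ (Fin 2)} (h₁ : ξ₁ ≠ 0)
    (h₂ : ξ₂ ≠ 0) : ‖unitComplex ξ₁ - unitComplex ξ₂‖ ≤ angle ξ₁ ξ₂ := by
  calc ‖unitComplex ξ₁ - unitComplex ξ₂‖ ≤ angle (unitComplex ξ₁) (unitComplex ξ₂) :=
        Complex.norm_sub_le_angle (norm_unitComplex h₁) (norm_unitComplex h₂)
    _ = angle ξ₁ ξ₂ := by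
        rw [unitComplex, unitComplex,
          ← LinearIsometryEquiv.coe_toLinearIsometry, LinearIsometry.angle_map,
          angle_smul_left_of_pos _ _ (inv_pos.mpr (norm_pos_iff.mpr h₁)),
          angle_smul_right_of_pos _ _ (inv_pos.mpr (norm_pos_iff.mpr h₂))]

theorem PiMat_eq (ξ : EuclideanSpace ℝ (Fin 2)) :
    PiMat ξ = (1 / 2 : ℂ) • !![1, conj (unitComplex ξ); unitComplex ξ, 1] := by
  ext i j
  fin_cases i <;> fin_cases j <;>
    simp [PiMat, sigma1, sigma2, unitComplex, orthonormalBasisOneI_repr_symm_apply] <;> ring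

theorem PiMat_mul_PiMat_neg (ξ₁ ξ₂ : EuclideanSpace ℝ (Fin 2)) :
    PiMat ξ₁ * PiMat (-ξ₂) = (1 / 4 : ℂ) •
      !![1 - conj (unitComplex ξ₁) * unitComplex ξ₂, conj (unitComplex ξ₁) - conj (unitComplex ξ₂);
        unitComplex ξ₁ - unitComplex ξ₂, 1 - unitComplex ξ₁ * conj (unitComplex ξ₂)] := by
  rw [PiMat_eq, PiMat_eq, unitComplex_neg, smul_mul_smul_comm, mul_fin_two]
  norm_num [sub_eq_add_neg, add_comm]

theorem Complex.norm_one_sub_conj_mul {u : ℂ} (hu : ‖u‖ = 1) (v : ℂ) :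
    ‖1 - conj u * v‖ = ‖u - v‖ := by
  have : conj u * u = 1 := by rw [conj_mul', hu]; norm_num
  rw [← this, ← mul_sub, norm_mul, norm_conj, hu, one_mul]

theorem Complex.norm_one_sub_mul_conj {u : ℂ} (hu : ‖u‖ = 1) (v : ℂ) :
    ‖1 - u * conj v‖ = ‖u - v‖ := by
  rw [← norm_conj, map_sub, map_one, map_mul, conj_conj, norm_one_sub_conj_mul hu]

section Frobenius

attribute [local instance] Matrix.frobeniusNormedAddCommGroup

theorem Matrix.frobenius_norm_mulVec {m n 𝕜 : Type*} [Fintype m] [Fintype n] [RCLike 𝕜]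
    (A : Matrix m n 𝕜) (x : EuclideanSpace 𝕜 n) : ‖WithLp.toLp 2 (A *ᵥ x)‖ ≤ ‖A‖ * ‖x‖ := by
  rw [← frobenius_norm_replicateCol (ι := Unit), ← frobenius_norm_replicateCol (ι := Unit),
    replicateCol_mulVec]
  exact frobenius_norm_mul _ _

theorem Matrix.frobenius_norm_le_of_forall_norm_le {m n 𝕜 : Type*} [Fintype m] [Fintype n]
    [RCLike 𝕜] {A : Matrix m n 𝕜} {c : ℝ} (hc : 0 ≤ c) (h : ∀ i j, ‖A i j‖ ≤ c) :
    ‖A‖ ≤ √(Fintype.card m * Fintype.card n) * c := by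
  rw [frobenius_norm_def, ← Real.sqrt_eq_rpow, ← Real.sqrt_sq hc, ← Real.sqrt_mul (by positivity)]
  refine Real.sqrt_le_sqrt ?_
  calc ∑ i, ∑ j, ‖A i j‖ ^ (2 : ℝ) ≤ ∑ _i : m, ∑ _j : n, c ^ 2 := by
        gcongr with i _ j
        rw [Real.rpow_two]
        exact pow_le_pow_left₀ (norm_nonneg _) (h i j) 2
    _ = _ := by simp [mul_assoc]

theorem norm_PiMat_mul_PiMat_neg_mulVec_le {ξ₁ : EuclideanSpace ℝ (Fin 2)} (h₁ : ξ₁ ≠ 0)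
    (ξ₂ : EuclideanSpace ℝ (Fin 2)) (z : EuclideanSpace ℂ (Fin 2)) :
    ‖WithLp.toLp 2 ((PiMat ξ₁ * PiMat (-ξ₂)) *ᵥ z)‖
      ≤ ‖unitComplex ξ₁ - unitComplex ξ₂‖ / 2 * ‖z‖ := by
  have hu := norm_unitComplex h₁
  have entries (i j : Fin 2) :
      ‖(PiMat ξ₁ * PiMat (-ξ₂)) i j‖ ≤ ‖unitComplex ξ₁ - unitComplex ξ₂‖ / 4 := by
    rw [PiMat_mul_PiMat_neg]
    fin_cases i <;> fin_cases j <;>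
      simp [norm_one_sub_conj_mul hu, norm_one_sub_mul_conj hu, ← map_sub, div_eq_inv_mul]
  calc _ ≤ ‖PiMat ξ₁ * PiMat (-ξ₂)‖ * ‖z‖ := frobenius_norm_mulVec _ _
    _ ≤ √(2 * 2) * (‖unitComplex ξ₁ - unitComplex ξ₂‖ / 4) * ‖z‖ := by
        gcongr
        simpa using frobenius_norm_le_of_forall_norm_le (by positivity) entries
    _ = ‖unitComplex ξ₁ - unitComplex ξ₂‖ / 2 * ‖z‖ := by
        rw [Real.sqrt_mul_self zero_le_two]; ring

end Frobenius

theorem PiMat_angle_bound :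
    ∃ C > (0 : ℝ), ∀ (z : EuclideanSpace ℂ (Fin 2)) (ξ₁ ξ₂ : EuclideanSpace ℝ (Fin 2)),
      ξ₁ ≠ 0 → ξ₂ ≠ 0 →
      ‖(WithLp.equiv 2 (Fin 2 → ℂ)).symm ((PiMat ξ₁ * PiMat (-ξ₂)).mulVec
          ((WithLp.equiv 2 (Fin 2 → ℂ)) z))‖ ≤
        C * ‖z‖ * InnerProductGeometry.angle ξ₁ ξ₂ := by
  refine ⟨1 / 2, one_half_pos, fun z ξ₁ ξ₂ h₁ h₂ => ?_⟩
  calc _ ≤ ‖unitComplex ξ₁ - unitComplex ξ₂‖ / 2 * ‖z‖ :=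
        norm_PiMat_mul_PiMat_neg_mulVec_le h₁ ξ₂ z
    _ ≤ angle ξ₁ ξ₂ / 2 * ‖z‖ := by gcongr; exact norm_unitComplex_sub_le_angle h₁ h₂
    _ = 1 / 2 * ‖z‖ * angle ξ₁ ξ₂ := by ring
end

section
/- The operator norm of Π(ξ_1) Π(-ξ_2) is bounded by the angle: for all nonzero ξ_1, ξ_2 ∈ R^2, ‖Π(ξ_1)Π(-ξ_2)‖_{op} ≤ 2 sin(∠(ξ_1,ξ_2)/2). -/
/-!
Write `ξ̂ = ξ / ‖ξ‖` as the unit complex number `z = ξ̂₁ + i ξ̂₂`; then `Π(ξ) = ½ !![1, z̄; z, 1]`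
and `Π(-ξ)` is the same with `-z`. Using `z̄ z = 1`, every entry of `Π(ξ₁) Π(-ξ₂)` has modulus
`|z₁ - z₂| / 4`, so its Frobenius norm, which dominates the operator norm, is `|ξ̂₁ - ξ̂₂| / 2`.
The chord between two unit vectors at angle `θ` has length `2 sin (θ / 2)`, so the operator norm is
in fact at most `sin (θ / 2)`.
-/

open Matrix

namespace InnerProductGeometry

open Real

variable {V : Type*} [NormedAddCommGroup V] [InnerProductSpace ℝ V]

theorem norm_sub_eq_two_mul_sin_half_angle {x y : V} (hx : ‖x‖ = 1) (hy : ‖y‖ = 1) :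
    ‖x - y‖ = 2 * sin (angle x y / 2) := by
  have hsin : 0 ≤ sin (angle x y / 2) :=
    sin_nonneg_of_nonneg_of_le_pi (by linarith [angle_nonneg x y])
      (by linarith [angle_le_pi x y, pi_pos])
  have hcos : cos (angle x y) = 1 - 2 * sin (angle x y / 2) ^ 2 := by
    have h := cos_two_mul (angle x y / 2)
    rw [mul_div_cancel₀ _ two_ne_zero, cos_sq'] at h
    linarith
  have hlaw := norm_sub_sq_eq_norm_sq_add_norm_sq_sub_two_mul_norm_mul_norm_mul_cos_angle x y
  rw [hx, hy, hcos] at hlaw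
  nlinarith [norm_nonneg (x - y)]

theorem norm_inv_norm_smul_sub_inv_norm_smul {x y : V} (hx : x ≠ 0) (hy : y ≠ 0) :
    ‖‖x‖⁻¹ • x - ‖y‖⁻¹ • y‖ = 2 * sin (angle x y / 2) := by
  have unit {z : V} (hz : z ≠ 0) : ‖‖z‖⁻¹ • z‖ = 1 := by
    rw [norm_smul, norm_inv, norm_norm, inv_mul_cancel₀ (norm_ne_zero_iff.2 hz)]
  rw [norm_sub_eq_two_mul_sin_half_angle (unit hx) (unit hy),
    angle_smul_left_of_pos _ _ (inv_pos.2 (norm_pos_iff.2 hx)),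
    angle_smul_right_of_pos _ _ (inv_pos.2 (norm_pos_iff.2 hy))]

end InnerProductGeometry

open ComplexConjugate

section Frobenius

open scoped Matrix.Norms.Frobenius

theorem Matrix.opNorm_toEuclideanLin_le_frobenius_norm {𝕜 m n : Type*} [RCLike 𝕜] [Fintype m]
    [Fintype n] [DecidableEq n] (A : Matrix m n 𝕜) :
    ‖LinearMap.toContinuousLinearMap (toEuclideanLin A)‖ ≤ ‖A‖ := by
  refine ContinuousLinearMap.opNorm_le_bound _ (norm_nonneg A) fun x ↦ ?_
  calc ‖toEuclideanLin A x‖ = ‖replicateCol Unit (A *ᵥ x.ofLp)‖ := by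
        rw [frobenius_norm_replicateCol]; rfl
    _ = ‖A * replicateCol Unit x.ofLp‖ := by rw [replicateCol_mulVec]
    _ ≤ ‖A‖ * ‖replicateCol Unit x.ofLp‖ := frobenius_norm_mul _ _
    _ = ‖A‖ * ‖x‖ := by rw [frobenius_norm_replicateCol]

/-- For `‖z‖ = 1` this is the projection onto the `+1`-eigenspace of `!![0, z̄; z, 0]`. -/
noncomputable def phaseProj (z : ℂ) : Matrix (Fin 2) (Fin 2) ℂ :=
  (1 / 2 : ℂ) • !![1, conj z; z, 1]

theorem PiMat_eq_phaseProj (ξ : EuclideanSpace ℝ (Fin 2)) :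
    PiMat ξ = phaseProj (Complex.orthonormalBasisOneI.repr.symm (‖ξ‖⁻¹ • ξ)) := by
  ext i j
  fin_cases i <;> fin_cases j <;> simp [PiMat, phaseProj, sigma1, sigma2, mul_add]

theorem frobenius_norm_phaseProj_mul_phaseProj {z : ℂ} (hz : ‖z‖ = 1) (w : ℂ) :
    ‖phaseProj z * phaseProj w‖ = ‖z + w‖ / 2 := by
  have hzz : conj z * z = 1 := by
    rw [Complex.conj_mul', hz]; norm_num
  have hprod : !![1, conj z; z, 1] * !![1, conj w; w, 1] =
      !![conj z * (z + w), conj (z + w); z + w, z * conj (z + w)] := by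
    ext i j
    fin_cases i <;> fin_cases j <;> simp [Matrix.mul_apply]
    · linear_combination -hzz
    · ring
    · linear_combination -hzz
  have hsum : ∑ i, ∑ j, ‖!![conj z * (z + w), conj (z + w); z + w, z * conj (z + w)] i j‖ ^ (2 : ℝ)
      = (2 * ‖z + w‖) ^ 2 := by
    simp only [of_apply, cons_val', cons_val_fin_one, Real.rpow_ofNat, Fin.sum_univ_two,
      cons_val_zero, cons_val_one, Complex.norm_mul, RCLike.norm_conj, hz, one_mul]
    ring
  rw [phaseProj, phaseProj, smul_mul_smul, hprod, norm_smul, frobenius_norm_def, hsum,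
    ← Real.sqrt_eq_rpow, Real.sqrt_sq (by positivity)]
  norm_num
  ring

theorem opNorm_PiMat_mul_PiMat_neg_le {ξ₁ : EuclideanSpace ℝ (Fin 2)} (h₁ : ξ₁ ≠ 0)
    (ξ₂ : EuclideanSpace ℝ (Fin 2)) :
    ‖LinearMap.toContinuousLinearMap (toEuclideanLin (PiMat ξ₁ * PiMat (-ξ₂)))‖ ≤
      ‖‖ξ₁‖⁻¹ • ξ₁ - ‖ξ₂‖⁻¹ • ξ₂‖ / 2 := by
  set e := Complex.orthonormalBasisOneI.repr.symm
  have hunit : ‖e (‖ξ₁‖⁻¹ • ξ₁)‖ = 1 := by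
    rw [e.norm_map, norm_smul, norm_inv, norm_norm, inv_mul_cancel₀ (norm_ne_zero_iff.2 h₁)]
  calc _ ≤ ‖PiMat ξ₁ * PiMat (-ξ₂)‖ := opNorm_toEuclideanLin_le_frobenius_norm _
    _ = ‖e (‖ξ₁‖⁻¹ • ξ₁) + e (‖-ξ₂‖⁻¹ • -ξ₂)‖ / 2 := by
        rw [PiMat_eq_phaseProj, PiMat_eq_phaseProj, frobenius_norm_phaseProj_mul_phaseProj hunit]
    _ = ‖‖ξ₁‖⁻¹ • ξ₁ - ‖ξ₂‖⁻¹ • ξ₂‖ / 2 := by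
        rw [norm_neg, smul_neg, ← map_add, e.norm_map, ← sub_eq_add_neg]

end Frobenius

theorem PiMat_opNorm_bound (ξ₁ ξ₂ : EuclideanSpace ℝ (Fin 2)) (h₁ : ξ₁ ≠ 0) (h₂ : ξ₂ ≠ 0) :
    ‖(LinearMap.toContinuousLinearMap (Matrix.toEuclideanLin (PiMat ξ₁ * PiMat (-ξ₂))))‖ ≤
      2 * Real.sin (InnerProductGeometry.angle ξ₁ ξ₂ / 2) := by
  calc _ ≤ ‖‖ξ₁‖⁻¹ • ξ₁ - ‖ξ₂‖⁻¹ • ξ₂‖ / 2 := opNorm_PiMat_mul_PiMat_neg_le h₁ ξ₂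
    _ ≤ ‖‖ξ₁‖⁻¹ • ξ₁ - ‖ξ₂‖⁻¹ • ξ₂‖ := half_le_self (norm_nonneg _)
    _ = 2 * Real.sin (InnerProductGeometry.angle ξ₁ ξ₂ / 2) :=
        InnerProductGeometry.norm_inv_norm_smul_sub_inv_norm_smul h₁ h₂
end
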